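/- Let X and Y be compact metric spaces, let E and F be smooth reflexive Banach spaces, and let Δ : Lip(X,E) → Lip(Y,F) be a 2-local standard isometry. Let y ∈ Y, x_0 ∈ X, v* ∈ S_{F*} and u_1*, u_2* ∈ S_{E*}. If (y,v*) ∈ A_{x_0,u_1*} and (y,v*) ∈ A_{x_0,u_2*}, then u_1* = u_2*. -/

import Mathlib

open Function Metric Set
open scoped NNReal

/-- A function between a metric space and a normed space is bounded and Lipschitz. -/
def IsBddLip {X E : Type*} [MetricSpace X] [NormedAddCommGroup E] (f : X → E) : Prop :=
  (∃ K : ℝ, ∀ x y : X, ‖f x - f y‖ ≤ K * dist x y) ∧ ∃ C : ℝ, ∀ x : X, ‖f x‖ ≤ C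

/-- The Lipschitz constant `L(f)` of a function. -/
noncomputable def lipConst {X E : Type*} [MetricSpace X] [NormedAddCommGroup E] (f : X → E) : ℝ :=
  sInf {K : ℝ | 0 ≤ K ∧ ∀ x y : X, ‖f x - f y‖ ≤ K * dist x y}

/-- The norm `max {L(f), ‖f‖∞}` of the space `Lip(X,E)`. -/
noncomputable def lipNorm {X E : Type*} [MetricSpace X] [NormedAddCommGroup E] (f : X → E) : ℝ :=
  max (lipConst f) (⨆ x : X, ‖f x‖)

/-- `T` is a surjective linear isometry from `Lip(X,E)` onto `Lip(Y,F)` (encoded on plain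
functions, with all requirements imposed on bounded Lipschitz functions). -/
structure IsLipIso (𝕜 : Type*) {X Y E F : Type*} [RCLike 𝕜] [MetricSpace X] [MetricSpace Y]
    [NormedAddCommGroup E] [NormedSpace 𝕜 E] [NormedAddCommGroup F] [NormedSpace 𝕜 F]
    (T : (X → E) → (Y → F)) : Prop where
  mapsLip : ∀ f, IsBddLip f → IsBddLip (T f)
  map_add : ∀ f g, IsBddLip f → IsBddLip g → T (f + g) = T f + T g
  map_smul : ∀ (c : 𝕜) (f), IsBddLip f → T (c • f) = c • T f
  norm_map : ∀ f, IsBddLip f → lipNorm (T f) = lipNorm f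
  surjOn : ∀ g, IsBddLip g → ∃ f, IsBddLip f ∧ T f = g

/-- `Δ : Lip(X,E) → Lip(Y,F)` is a `2`-local isometry. -/
def Is2LocalLipIso (𝕜 : Type*) {X Y E F : Type*} [RCLike 𝕜] [MetricSpace X] [MetricSpace Y]
    [NormedAddCommGroup E] [NormedSpace 𝕜 E] [NormedAddCommGroup F] [NormedSpace 𝕜 F]
    (Δ : (X → E) → (Y → F)) : Prop :=
  ∀ f g : X → E, IsBddLip f → IsBddLip g →
    ∃ T : (X → E) → (Y → F), IsLipIso 𝕜 T ∧ Δ f = T f ∧ Δ g = T g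

/-- `φ` preserves distances less than `2`. -/
def PreservesDistLT2 {Y X : Type*} [MetricSpace Y] [MetricSpace X] (φ : Y → X) : Prop :=
  ∀ y y' : Y, dist y y' < 2 → dist (φ y) (φ y') = dist y y'

/-- Two points lie in the same `2`-component: they are joined by a finite chain of points with
consecutive distances less than `2`. -/
def SameTwoComponent {Y : Type*} [MetricSpace Y] : Y → Y → Prop :=
  Relation.ReflTransGen fun a b => dist a b < 2

/-- `T` is a standard isometry from `Lip(X,E)` to `Lip(Y,F)`: there are `φ ∈ Iso_{<2}(Y,X)` and
`J : Y → Iso(E,F)` constant on `2`-components with `T f y = J y (f (φ y))`. -/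
def IsStandardLipIso (𝕜 : Type*) {X Y E F : Type*} [RCLike 𝕜] [MetricSpace X] [MetricSpace Y]
    [NormedAddCommGroup E] [NormedSpace 𝕜 E] [NormedAddCommGroup F] [NormedSpace 𝕜 F]
    (T : (X → E) → (Y → F)) : Prop :=
  ∃ (φ : Y → X) (ψ : X → Y) (J : Y → E ≃ₗᵢ[𝕜] F),
    Function.LeftInverse ψ φ ∧ Function.RightInverse ψ φ ∧
    PreservesDistLT2 φ ∧ PreservesDistLT2 ψ ∧
    (∀ y y' : Y, SameTwoComponent y y' → J y = J y') ∧
    ∀ f, IsBddLip f → ∀ y : Y, T f y = J y (f (φ y))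

/-- `Δ : Lip(X,E) → Lip(Y,F)` is a `2`-local standard isometry. -/
def Is2LocalStdLipIso (𝕜 : Type*) {X Y E F : Type*} [RCLike 𝕜] [MetricSpace X] [MetricSpace Y]
    [NormedAddCommGroup E] [NormedSpace 𝕜 E] [NormedAddCommGroup F] [NormedSpace 𝕜 F]
    (Δ : (X → E) → (Y → F)) : Prop :=
  ∀ f g : X → E, IsBddLip f → IsBddLip g →
    ∃ T : (X → E) → (Y → F), IsStandardLipIso 𝕜 T ∧ Δ f = T f ∧ Δ g = T g

/-- A normed space is smooth: every norm-one vector has a unique norm-one supporting functional. -/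
def IsSmooth (𝕜 : Type*) (E : Type*) [RCLike 𝕜] [NormedAddCommGroup E] [NormedSpace 𝕜 E] :
    Prop :=
  ∀ e : E, ‖e‖ = 1 → ∃! u : StrongDual 𝕜 E, ‖u‖ = 1 ∧ u e = 1

/-- A normed space is reflexive: the canonical inclusion in the double dual is onto. -/
def IsReflexiveSp (𝕜 : Type*) (E : Type*) [RCLike 𝕜] [NormedAddCommGroup E] [NormedSpace 𝕜 E] :
    Prop :=
  Function.Surjective (NormedSpace.inclusionInDoubleDual 𝕜 E)

/-- `E` is `2`-iso-reflexive: every `2`-local isometry on `E` is linear and surjective. -/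
def TwoIsoReflexive (𝕜 : Type*) (E : Type*) [RCLike 𝕜] [NormedAddCommGroup E] [NormedSpace 𝕜 E] :
    Prop :=
  ∀ Δ : E → E, (∀ a b : E, ∃ T : E ≃ₗᵢ[𝕜] E, Δ a = T a ∧ Δ b = T b) →
    (∀ a b : E, Δ (a + b) = Δ a + Δ b) ∧ (∀ (c : 𝕜) (a : E), Δ (c • a) = c • Δ a) ∧
      Function.Surjective Δ

/-- The set `A_{x,u*,f} = {(y,v*) ∈ Y × B_{F*} : v*(Δ(f)(y)) = u*(f(x))}`. -/
def setA (𝕜 : Type*) {X Y E F : Type*} [RCLike 𝕜] [MetricSpace X] [MetricSpace Y]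
    [NormedAddCommGroup E] [NormedSpace 𝕜 E] [NormedAddCommGroup F] [NormedSpace 𝕜 F]
    (Δ : (X → E) → (Y → F)) (x : X) (u : StrongDual 𝕜 E) (f : X → E) :
    Set (Y × StrongDual 𝕜 F) :=
  {p | ‖p.2‖ ≤ 1 ∧ p.2 (Δ f p.1) = u (f x)}

/-- The set `A_{x,u*} = ⋂_{f ∈ Lip(X,E)} A_{x,u*,f}`. -/
def setAInter (𝕜 : Type*) {X Y E F : Type*} [RCLike 𝕜] [MetricSpace X] [MetricSpace Y]
    [NormedAddCommGroup E] [NormedSpace 𝕜 E] [NormedAddCommGroup F] [NormedSpace 𝕜 F]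
    (Δ : (X → E) → (Y → F)) (x : X) (u : StrongDual 𝕜 E) :
    Set (Y × StrongDual 𝕜 F) :=
  ⋂ f ∈ {f : X → E | IsBddLip f}, setA 𝕜 Δ x u f

theorem isBddLip_const {X E : Type*} [MetricSpace X] [NormedAddCommGroup E] (e : E) :
    IsBddLip (fun _ : X => e) :=
  ⟨⟨0, fun _ _ => by simp⟩, ⟨‖e‖, fun _ => le_rfl⟩⟩

theorem apply_eq_of_mem_setAInter {𝕜 X Y E F : Type*} [RCLike 𝕜] [MetricSpace X] [MetricSpace Y]
    [NormedAddCommGroup E] [NormedSpace 𝕜 E] [NormedAddCommGroup F] [NormedSpace 𝕜 F]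
    {Δ : (X → E) → (Y → F)} {x : X} {u : StrongDual 𝕜 E} {p : Y × StrongDual 𝕜 F}
    (hp : p ∈ setAInter 𝕜 Δ x u) {f : X → E} (hf : IsBddLip f) :
    p.2 (Δ f p.1) = u (f x) :=
  (Set.mem_iInter₂.mp hp f hf).2

theorem stmt4_general {𝕜 X Y E F : Type*} [RCLike 𝕜]
    [MetricSpace X] [MetricSpace Y]
    [NormedAddCommGroup E] [NormedSpace 𝕜 E]
    [NormedAddCommGroup F] [NormedSpace 𝕜 F]
    (Δ : (X → E) → (Y → F))
    (y : Y) (x₀ : X) (v : StrongDual 𝕜 F) (u₁ u₂ : StrongDual 𝕜 E)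
    (h₁ : (y, v) ∈ setAInter 𝕜 Δ x₀ u₁) (h₂ : (y, v) ∈ setAInter 𝕜 Δ x₀ u₂) :
    u₁ = u₂ :=
  ContinuousLinearMap.ext fun e =>
    (apply_eq_of_mem_setAInter h₁ (isBddLip_const e)).symm.trans
      (apply_eq_of_mem_setAInter h₂ (isBddLip_const e))

/-- Lemma 2.2(b): the functional `u*` is uniquely determined. -/
theorem stmt4 {𝕜 X Y E F : Type*} [RCLike 𝕜]
    [MetricSpace X] [CompactSpace X] [MetricSpace Y] [CompactSpace Y]
    [NormedAddCommGroup E] [NormedSpace 𝕜 E] [CompleteSpace E]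
    [NormedAddCommGroup F] [NormedSpace 𝕜 F] [CompleteSpace F]
    (hEsm : IsSmooth 𝕜 E) (hErefl : IsReflexiveSp 𝕜 E)
    (hFsm : IsSmooth 𝕜 F) (hFrefl : IsReflexiveSp 𝕜 F)
    (Δ : (X → E) → (Y → F)) (hΔ : Is2LocalStdLipIso 𝕜 Δ)
    (y : Y) (x₀ : X) (v : StrongDual 𝕜 F) (u₁ u₂ : StrongDual 𝕜 E)
    (hv : ‖v‖ = 1) (hu₁ : ‖u₁‖ = 1) (hu₂ : ‖u₂‖ = 1)
    (h₁ : (y, v) ∈ setAInter 𝕜 Δ x₀ u₁) (h₂ : (y, v) ∈ setAInter 𝕜 Δ x₀ u₂) :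
    u₁ = u₂ :=
  stmt4_general Δ y x₀ v u₁ u₂ h₁ h₂
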